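/- arXiv:2311.11005 — 11 statements merged into one kernel-verified Lean document; each statement's English description precedes it below -/
import Mathlib

section
/- Let b ≥ 1 and k ≥ b + 1 be integers and let n ≥ k be an integer. Then every exact k-coloring χ of [n] contains a rainbow solution of y = x + b; that is, there exists x ∈ [n] with x + b ≤ n and χ(x) ≠ χ(x+b). Consequently, for every equation E, the Gallai–Rado number GR_k(y = x + b : E) equals k. -/
lemma aux_card_stmt6 {k m : ℕ} (χ : ℕ → Fin k) (f : Fin k → ℕ)
    (hmem : ∀ c, f c ∈ Finset.Icc 1 m) (hf : ∀ c, χ (f c) = c) : k ≤ m := by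
  have hinj : Function.Injective f := fun a b h => by rw [← hf a, ← hf b, h]
  have h := Finset.card_le_card_of_injOn (s := Finset.univ) (t := Finset.Icc 1 m) f
    (fun c _ => hmem c) hinj.injOn
  simpa using h

/-- Let `b ≥ 1` and `k ≥ b + 1`. Then for every `n ≥ k`, every exact `k`-coloring of `[n]`
contains a rainbow solution of `y = x + b`. Consequently, for every equation `E`
(represented abstractly by its monochromatic-solution predicate `Mono χ n`, saying that the
coloring `χ` admits a monochromatic solution of `E` inside `[n]`), the Gallai–Rado number
`GR_k(y = x + b : E)` equals `k`: `k` is the least positive integer `N` such that for all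
`n ≥ N`, exact `k`-colorings of `[n]` exist and every such coloring contains either a
rainbow solution of `y = x + b` or a monochromatic solution of `E`. -/
theorem stmt_6 (b k : ℕ) (hb : 1 ≤ b) (hk : b + 1 ≤ k) :
    (∀ n, k ≤ n → ∀ χ : ℕ → Fin k, (∀ c, ∃ x, 1 ≤ x ∧ x ≤ n ∧ χ x = c) →
      ∃ x, 1 ≤ x ∧ x + b ≤ n ∧ χ x ≠ χ (x + b)) ∧
    ∀ Mono : (ℕ → Fin k) → ℕ → Prop,
      IsLeast {N : ℕ | 1 ≤ N ∧ ∀ n, N ≤ n →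
        (∃ χ : ℕ → Fin k, ∀ c, ∃ x, 1 ≤ x ∧ x ≤ n ∧ χ x = c) ∧
        (∀ χ : ℕ → Fin k, (∀ c, ∃ x, 1 ≤ x ∧ x ≤ n ∧ χ x = c) →
          (∃ x, 1 ≤ x ∧ x + b ≤ n ∧ χ x ≠ χ (x + b)) ∨ Mono χ n)} k := by
  have main : ∀ n, k ≤ n → ∀ χ : ℕ → Fin k, (∀ c, ∃ x, 1 ≤ x ∧ x ≤ n ∧ χ x = c) →
      ∃ x, 1 ≤ x ∧ x + b ≤ n ∧ χ x ≠ χ (x + b) := by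
    intro n hn χ hsurj
    by_contra hno
    push_neg at hno
    have hper : ∀ x, 1 ≤ x → x ≤ n → χ x = χ ((x - 1) % b + 1) := by
      intro x
      induction x using Nat.strong_induction_on with
      | _ x ih =>
        intro hx1 hxn
        by_cases hxb : x ≤ b
        · have h : (x - 1) % b = x - 1 := Nat.mod_eq_of_lt (by omega)
          rw [h]; congr 1; omega
        · have h1 : χ (x - b) = χ x := by
            have := hno (x - b) (by omega) (by omega)
            rwa [Nat.sub_add_cancel (by omega)] at this
          have h2 := ih (x - b) (by omega) (by omega) (by omega)
          have h3 : (x - b - 1) % b = (x - 1) % b := by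
            have h4 : x - 1 = (x - b - 1) + b := by omega
            rw [h4, Nat.add_mod_right]
          rw [← h1, h2, h3]
    choose g hg1 hg2 hg3 using hsurj
    have hk' := aux_card_stmt6 (m := b) χ (fun c => (g c - 1) % b + 1)
      (fun c => by
        have := Nat.mod_lt (g c - 1) (show 0 < b by omega)
        simp only [Finset.mem_Icc]
        omega)
      (fun c => by
        have := hper (g c) (hg1 c) (hg2 c)
        rw [← this]; exact hg3 c)
    omega
  refine ⟨main, fun Mono => ⟨⟨by omega, fun n hn => ?_⟩, ?_⟩⟩
  · constructor
    · refine ⟨fun x => if h : 1 ≤ x ∧ x ≤ k then ⟨x - 1, by omega⟩ else ⟨0, by omega⟩,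
        fun c => ⟨c.val + 1, by omega, by have := c.isLt; omega, ?_⟩⟩
      have hc : 1 ≤ c.val + 1 ∧ c.val + 1 ≤ k := by have := c.isLt; omega
      simp only [dif_pos hc]
      exact Fin.ext (by simp)
    · exact fun χ hχ => Or.inl (main n hn χ hχ)
  · rintro N ⟨hN1, hN2⟩
    by_contra hlt
    push_neg at hlt
    obtain ⟨⟨χ, hχ⟩, -⟩ := hN2 (k - 1) (by omega)
    choose g hg1 hg2 hg3 using hχ
    have := aux_card_stmt6 χ g (fun c => by simp only [Finset.mem_Icc]; exact ⟨hg1 c, hg2 c⟩) hg3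
    omega
end

section
/- Let t ≥ 1, b ≥ 2, c ≥ 0 be integers and let a_1, ..., a_t be integers with a_i ≥ 1 for all i ∈ [t]. Suppose λ_min = min{λ ∈ {1,...,b} : (Σ_{i=1}^t a_i)·λ + c − λ ≡ 0 (mod b)} exists, and set N = Σ_{i=1}^t (λ_min + (i−1)b)·a_i + c. Then for every integer n ≥ N, every exact b-coloring χ of [n] contains either a rainbow solution of y = x + b (an x with x + b ≤ n and χ(x) ≠ χ(x+b)) or a monochromatic solution of y = Σ_{i=1}^t a_i x_i + c (elements x_1, ..., x_t ∈ [n] with y = Σ_{i=1}^t a_i x_i + c ≤ n and χ(x_1) = χ(x_2) = ... = χ(x_t) = χ(y)). -/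
/-!
Without a rainbow solution of `y = x + b`, the coloring is constant on each residue class
modulo `b` inside `[n]`. Take `xᵢ = λ_min + (i - 1) b`: all `xᵢ` are `≡ λ_min (mod b)`, and by the
choice of `λ_min` so is `y = Σ aᵢ xᵢ + c ≡ (Σ aᵢ) λ_min + c`. Since `y = N ≤ n` and every
`xᵢ ≤ y`, the `xᵢ` and `y` lie in one residue class of `[n]` and hence share a color.
-/

open Finset

section NoRainbow

variable {α : Type*} {χ : ℕ → α} {b n : ℕ}

theorem apply_eq_apply_add_mul (h : ∀ x, 1 ≤ x → x + b ≤ n → χ x = χ (x + b)) (k : ℕ) {x : ℕ}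
    (hx : 1 ≤ x) (hxn : x + k * b ≤ n) : χ x = χ (x + k * b) := by
  induction k generalizing x with
  | zero => simp
  | succ k ih =>
    have hxn' : x + b + k * b ≤ n := by linarith [Nat.succ_mul k b]
    calc χ x = χ (x + b) := h x hx (by omega)
      _ = χ (x + b + k * b) := ih (by omega) hxn'
      _ = χ (x + (k + 1) * b) := by ring_nf

theorem apply_eq_of_modEq (h : ∀ x, 1 ≤ x → x + b ≤ n → χ x = χ (x + b)) {x y : ℕ}
    (hx : 1 ≤ x) (hxy : x ≤ y) (hyn : y ≤ n) (hmod : x ≡ y [MOD b]) : χ x = χ y := by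
  obtain ⟨k, hk⟩ := (Nat.modEq_iff_dvd' hxy).mp hmod
  have hy : y = x + k * b := by rw [mul_comm]; omega
  subst hy
  exact apply_eq_apply_add_mul h k hx hyn

end NoRainbow

theorem le_sum_mul_of_one_le {ι : Type*} {s : Finset ι} {a x : ι → ℕ} {i : ι} (hi : i ∈ s)
    (hai : 1 ≤ a i) : x i ≤ ∑ j ∈ s, a j * x j :=
  calc x i ≤ a i * x i := Nat.le_mul_of_pos_left _ hai
    _ ≤ ∑ j ∈ s, a j * x j := single_le_sum (f := fun j => a j * x j) (by simp) hi

open Finset in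
theorem stmt_7_general (t b c : ℕ) (a : ℕ → ℕ)
    (ha : ∀ i, 1 ≤ i → i ≤ t → 1 ≤ a i) (lmin : ℕ)
    (hlm : IsLeast {l : ℕ | 1 ≤ l ∧ l ≤ b ∧
      (∑ i ∈ Icc 1 t, a i) * l + c ≡ l [MOD b]} lmin) :
    ∀ n, (∑ i ∈ Icc 1 t, (lmin + (i - 1) * b) * a i) + c ≤ n →
      ∀ χ : ℕ → Fin b, (∀ col, ∃ x, 1 ≤ x ∧ x ≤ n ∧ χ x = col) →
        (∃ x, 1 ≤ x ∧ x + b ≤ n ∧ χ x ≠ χ (x + b)) ∨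
        (∃ x : ℕ → ℕ, (∀ i, 1 ≤ i → i ≤ t → 1 ≤ x i ∧ x i ≤ n) ∧
          (∑ i ∈ Icc 1 t, a i * x i) + c ≤ n ∧
          ∀ i, 1 ≤ i → i ≤ t → χ (x i) = χ ((∑ i ∈ Icc 1 t, a i * x i) + c)) := by
  intro n hn χ _
  refine or_iff_not_imp_left.mpr fun hrainbow => ?_
  push Not at hrainbow
  obtain ⟨⟨hl1, -, hlmod⟩, -⟩ := hlm
  set x : ℕ → ℕ := fun i => lmin + (i - 1) * b
  set y := (∑ i ∈ Icc 1 t, a i * x i) + c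
  have hxmod (i : ℕ) : x i ≡ lmin [MOD b] := by simp [x, Nat.ModEq]
  have hymod : y ≡ lmin [MOD b] :=
    calc y ≡ (∑ i ∈ Icc 1 t, a i) * lmin + c [MOD b] := by
          rw [sum_mul]
          exact (Nat.ModEq.sum fun i _ => (hxmod i).mul_left (a i)).add_right c
      _ ≡ lmin [MOD b] := hlmod
  have hyn : y ≤ n := by simpa only [y, x, mul_comm] using hn
  have hx1 (i : ℕ) : 1 ≤ x i := hl1.trans (Nat.le_add_right _ _)
  have hxy (i : ℕ) (h1 : 1 ≤ i) (h2 : i ≤ t) : x i ≤ y :=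
    (le_sum_mul_of_one_le (mem_Icc.mpr ⟨h1, h2⟩) (ha i h1 h2)).trans (Nat.le_add_right _ c)
  refine ⟨x, fun i h1 h2 => ⟨hx1 i, (hxy i h1 h2).trans hyn⟩, hyn, fun i h1 h2 => ?_⟩
  exact apply_eq_of_modEq hrainbow (hx1 i) (hxy i h1 h2) hyn ((hxmod i).trans hymod.symm)

open Finset in
/-- upper bound for `GR_b(y = x + b : y = Σ aᵢxᵢ + c)`.
Let `t ≥ 1`, `b ≥ 2`, `c ≥ 0` and `aᵢ ≥ 1` for `i ∈ [t]`. Suppose `λ_min` is the least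
`λ ∈ {1,…,b}` with `(Σᵢ aᵢ)·λ + c ≡ λ (mod b)`, and let
`N = Σᵢ (λ_min + (i−1)·b)·aᵢ + c`. Then for every `n ≥ N`, every exact `b`-coloring of
`[n]` contains either a rainbow solution of `y = x + b` or a monochromatic solution of
`y = Σᵢ aᵢxᵢ + c`. -/
theorem stmt_7 (t b c : ℕ) (a : ℕ → ℕ) (ht : 1 ≤ t) (hb : 2 ≤ b)
    (ha : ∀ i, 1 ≤ i → i ≤ t → 1 ≤ a i) (lmin : ℕ)
    (hlm : IsLeast {l : ℕ | 1 ≤ l ∧ l ≤ b ∧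
      (∑ i ∈ Icc 1 t, a i) * l + c ≡ l [MOD b]} lmin) :
    ∀ n, (∑ i ∈ Icc 1 t, (lmin + (i - 1) * b) * a i) + c ≤ n →
      ∀ χ : ℕ → Fin b, (∀ col, ∃ x, 1 ≤ x ∧ x ≤ n ∧ χ x = col) →
        (∃ x, 1 ≤ x ∧ x + b ≤ n ∧ χ x ≠ χ (x + b)) ∨
        (∃ x : ℕ → ℕ, (∀ i, 1 ≤ i → i ≤ t → 1 ≤ x i ∧ x i ≤ n) ∧
          (∑ i ∈ Icc 1 t, a i * x i) + c ≤ n ∧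
          ∀ i, 1 ≤ i → i ≤ t → χ (x i) = χ ((∑ i ∈ Icc 1 t, a i * x i) + c)) :=
  stmt_7_general t b c a ha lmin hlm
end

section
/- Let t ≥ 1, b ≥ 2, c ≥ 0 be integers and let a_1, ..., a_t be integers with a_i ≥ 1 for all i ∈ [t]. Suppose that no λ ∈ {1,...,b} satisfies (Σ_{i=1}^t a_i)·λ + c − λ ≡ 0 (mod b). Then there exists an exact b-coloring χ of ℕ+ (namely, coloring each m by its residue class modulo b) such that χ(x) = χ(x+b) for all x ∈ ℕ+ (so there is no rainbow solution of y = x + b) and such that there are no x_1, ..., x_t ∈ ℕ+ with χ(x_1) = ... = χ(x_t) = χ(Σ_{i=1}^t a_i x_i + c) (so there is no monochromatic solution of y = Σ_{i=1}^t a_i x_i + c). Consequently, GR_b(y = x + b : y = Σ_{i=1}^t a_i x_i + c) does not exist. -/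
open Finset in
/-- nonexistence of `GR_b(y = x + b : y = Σ aᵢxᵢ + c)`.
Let `t ≥ 1`, `b ≥ 2`, `c ≥ 0` and `aᵢ ≥ 1` for `i ∈ [t]`, and suppose no `λ ∈ {1,…,b}`
satisfies `(Σᵢ aᵢ)·λ + c ≡ λ (mod b)`. Then there is an exact `b`-coloring `χ` of `ℕ+`
with `χ x = χ (x + b)` for all positive `x` (no rainbow solution of `y = x + b`) and no
positive `x₁,…,x_t` with `χ(x₁) = ⋯ = χ(x_t) = χ(Σᵢ aᵢxᵢ + c)` (no monochromatic
solution); consequently `GR_b(y = x + b : y = Σᵢ aᵢxᵢ + c)` does not exist. -/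
theorem stmt_9 (t b c : ℕ) (a : ℕ → ℕ) (ht : 1 ≤ t) (hb : 2 ≤ b)
    (ha : ∀ i, 1 ≤ i → i ≤ t → 1 ≤ a i)
    (hno : ¬ ∃ l : ℕ, 1 ≤ l ∧ l ≤ b ∧ (∑ i ∈ Icc 1 t, a i) * l + c ≡ l [MOD b]) :
    (∃ χ : ℕ → Fin b, (∀ col, ∃ x, 1 ≤ x ∧ χ x = col) ∧
      (∀ x, 1 ≤ x → χ x = χ (x + b)) ∧
      ¬ ∃ x : ℕ → ℕ, (∀ i, 1 ≤ i → i ≤ t → 1 ≤ x i) ∧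
        ∀ i, 1 ≤ i → i ≤ t → χ (x i) = χ ((∑ i ∈ Icc 1 t, a i * x i) + c)) ∧
    ¬ ∃ N : ℕ, 1 ≤ N ∧ ∀ n, N ≤ n →
      ∀ χ : ℕ → Fin b, (∀ col, ∃ x, 1 ≤ x ∧ x ≤ n ∧ χ x = col) →
        (∃ x, 1 ≤ x ∧ x + b ≤ n ∧ χ x ≠ χ (x + b)) ∨
        (∃ x : ℕ → ℕ, (∀ i, 1 ≤ i → i ≤ t → 1 ≤ x i ∧ x i ≤ n) ∧
          (∑ i ∈ Icc 1 t, a i * x i) + c ≤ n ∧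
          ∀ i, 1 ≤ i → i ≤ t → χ (x i) = χ ((∑ i ∈ Icc 1 t, a i * x i) + c)) := by
  have hb0 : 0 < b := by omega
  set χ : ℕ → Fin b := fun m => ⟨m % b, Nat.mod_lt _ hb0⟩ with hχ
  have hsurj : ∀ col : Fin b, ∃ x, 1 ≤ x ∧ x ≤ 2 * b ∧ χ x = col := by
    intro col
    refine ⟨col.val + b, by omega, by have := col.isLt; omega, ?_⟩
    apply Fin.ext
    simp [hχ, Nat.add_mod, Nat.mod_eq_of_lt col.isLt]
  have hperiod : ∀ x : ℕ, χ x = χ (x + b) := by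
    intro x; apply Fin.ext; simp [hχ, Nat.add_mod]
  have hmono : ¬ ∃ x : ℕ → ℕ, (∀ i, 1 ≤ i → i ≤ t → 1 ≤ x i) ∧
        ∀ i, 1 ≤ i → i ≤ t → χ (x i) = χ ((∑ i ∈ Icc 1 t, a i * x i) + c) := by
    rintro ⟨x, hx1, hxc⟩
    set y := (∑ i ∈ Icc 1 t, a i * x i) + c with hy
    set l : ℕ := if y % b = 0 then b else y % b with hl
    have hyb := Nat.mod_lt y hb0
    have hl1 : 1 ≤ l := by rw [hl]; split <;> omega
    have hlb : l ≤ b := by rw [hl]; split <;> omega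
    have hlym : l ≡ y [MOD b] := by
      unfold Nat.ModEq
      rcases Nat.eq_zero_or_pos (y % b) with h | h
      · rw [hl, if_pos h, Nat.mod_self, h]
      · rw [hl, if_neg (by omega)]
        exact Nat.mod_mod_of_dvd _ dvd_rfl
    have hly : (l : ZMod b) = (y : ZMod b) :=
      (ZMod.natCast_eq_natCast_iff _ _ _).mpr hlym
    -- each x i ≡ y ≡ l in ZMod b
    have hxcast : ∀ i ∈ Icc 1 t, ((x i : ZMod b)) = (l : ZMod b) := by
      intro i hi
      rw [mem_Icc] at hi
      have h := hxc i hi.1 hi.2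
      have hmod : x i % b = y % b := congrArg Fin.val h
      rw [hly]
      exact (ZMod.natCast_eq_natCast_iff _ _ _).mpr hmod
    apply hno
    refine ⟨l, hl1, hlb, ?_⟩
    apply (ZMod.natCast_eq_natCast_iff _ _ _).mp
    push_cast
    calc (∑ i ∈ Icc 1 t, (a i : ZMod b)) * (l : ZMod b) + (c : ZMod b)
        = (∑ i ∈ Icc 1 t, (a i : ZMod b) * (x i : ZMod b)) + (c : ZMod b) := by
          rw [Finset.sum_mul]
          congr 1
          exact Finset.sum_congr rfl fun i hi => by rw [hxcast i hi]
      _ = (y : ZMod b) := by rw [hy]; push_cast; ring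
      _ = (l : ZMod b) := hly.symm
  refine ⟨⟨χ, fun col => ?_, fun x _ => hperiod x, hmono⟩, ?_⟩
  · obtain ⟨x, hx1, _, hxc⟩ := hsurj col
    exact ⟨x, hx1, hxc⟩
  · rintro ⟨N, hN1, hN⟩
    have h := hN (max N (2 * b)) (le_max_left _ _) χ (by
      intro col
      obtain ⟨x, hx1, hx2, hxc⟩ := hsurj col
      exact ⟨x, hx1, le_trans hx2 (le_max_right _ _), hxc⟩)
    rcases h with ⟨x, _, _, hne⟩ | ⟨x, hx1, _, hxc⟩
    · exact hne (hperiod x)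
    · exact hmono ⟨x, fun i h1 h2 => (hx1 i h1 h2).1, hxc⟩
end

section
/- Let a ≥ 1, b ≥ 0, c ≥ 2 be integers with a and b both odd. Then there exists an exact 2-coloring χ of ℕ+ (namely, the parity coloring: all odd numbers one color, all even numbers the other) such that χ(x) = χ(x+2) for all x ∈ ℕ+ (no rainbow solution of y = x + 2) and χ(x) ≠ χ(a·x^c + b) for all x ∈ ℕ+ (no monochromatic solution of y = a·x^c + b). Consequently, GR_2(y = x + 2 : y = a·x^c + b) does not exist. -/
/-- the case `a`, `b` both odd.
For integers `a ≥ 1`, `b ≥ 0`, `c ≥ 2` with `a` and `b` both odd, there is an exact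
`2`-coloring `χ` of `ℕ+` (the parity coloring) with `χ x = χ (x + 2)` for all positive `x`
(no rainbow solution of `y = x + 2`) and `χ x ≠ χ (a·x^c + b)` for all positive `x`
(no monochromatic solution of `y = a·x^c + b`); consequently
`GR_2(y = x + 2 : y = a·x^c + b)` does not exist. -/
theorem stmt_10 (a b c : ℕ) (ha : 1 ≤ a) (hc : 2 ≤ c) (hao : Odd a) (hbo : Odd b) :
    (∃ χ : ℕ → Fin 2, (∀ col, ∃ x, 1 ≤ x ∧ χ x = col) ∧
      (∀ x, 1 ≤ x → χ x = χ (x + 2)) ∧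
      (∀ x, 1 ≤ x → χ x ≠ χ (a * x ^ c + b))) ∧
    ¬ ∃ N : ℕ, 1 ≤ N ∧ ∀ n, N ≤ n →
      ∀ χ : ℕ → Fin 2, (∀ col, ∃ x, 1 ≤ x ∧ x ≤ n ∧ χ x = col) →
        (∃ x, 1 ≤ x ∧ x + 2 ≤ n ∧ χ x ≠ χ (x + 2)) ∨
        (∃ x, 1 ≤ x ∧ a * x ^ c + b ≤ n ∧ χ x = χ (a * x ^ c + b)) := by
  set χ : ℕ → Fin 2 := fun x => ⟨x % 2, Nat.mod_lt _ two_pos⟩ with hχ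
  have hamod : a % 2 = 1 := Nat.odd_iff.mp hao
  have hbmod : b % 2 = 1 := Nat.odd_iff.mp hbo
  have par : ∀ x : ℕ, (a * x ^ c + b) % 2 = (x + 1) % 2 := by
    intro x
    have hx : x ^ c % 2 = x % 2 := by
      rcases Nat.mod_two_eq_zero_or_one x with h1 | h1 <;>
        rw [Nat.pow_mod, h1] <;> simp [Nat.zero_pow (by omega : 0 < c)]
    conv_lhs => rw [Nat.add_mod, Nat.mul_mod, hamod, hx, hbmod]
    rcases Nat.mod_two_eq_zero_or_one x with h1 | h1 <;> rw [h1] <;> omega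
  have hne : ∀ x : ℕ, χ x ≠ χ (a * x ^ c + b) := by
    intro x h
    have : x % 2 = (a * x ^ c + b) % 2 := congrArg Fin.val h
    have := par x
    omega
  have heq : ∀ x : ℕ, χ x = χ (x + 2) := by
    intro x
    simp only [hχ]
    congr 1
    omega
  refine ⟨⟨χ, ?_, fun x _ => heq x, fun x _ => hne x⟩, ?_⟩
  · intro col
    fin_cases col
    · exact ⟨2, by norm_num, rfl⟩
    · exact ⟨1, by norm_num, rfl⟩
  · rintro ⟨N, hN, hAll⟩
    have hsurj : ∀ col : Fin 2, ∃ x, 1 ≤ x ∧ x ≤ max N 2 ∧ χ x = col := by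
      intro col
      fin_cases col
      · exact ⟨2, by norm_num, le_max_right _ _, rfl⟩
      · exact ⟨1, by norm_num, le_trans (by norm_num) (le_max_right _ _), rfl⟩
    rcases hAll (max N 2) (le_max_left _ _) χ hsurj with ⟨x, _, _, hx⟩ | ⟨x, _, _, hx⟩
    · exact hx (heq x)
    · exact hne x hx
end

section
/- Let a ≥ 1, b ≥ 0, c ≥ 2 be integers such that a and b have different parity (exactly one of a, b is odd). Then for every integer n ≥ a + b, every exact 2-coloring χ of [n] contains either a rainbow solution of y = x + 2 (an x with x + 2 ≤ n and χ(x) ≠ χ(x+2)) or a monochromatic solution of y = a·x^c + b (an x ∈ [n] with a·x^c + b ≤ n and χ(x) = χ(a·x^c + b)). -/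
/-! Take `x = 1`: then `a·x^c + b = a + b`, which is odd by the parity hypothesis. Without a
rainbow solution of `y = x + 2` the coloring is constant along each residue class mod `2`, so
`1` and `a + b` get the same color. -/

theorem apply_add_two_mul_eq_of_forall_apply_add_two_eq {α : Type*} {n : ℕ} {χ : ℕ → α}
    (h : ∀ x, 1 ≤ x → x + 2 ≤ n → χ x = χ (x + 2)) {x : ℕ} (hx : 1 ≤ x) :
    ∀ k, x + 2 * k ≤ n → χ x = χ (x + 2 * k)
  | 0, _ => rfl
  | k + 1, hk => by
    rw [apply_add_two_mul_eq_of_forall_apply_add_two_eq h hx k (by omega),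
      h (x + 2 * k) (by omega) (by omega), mul_add_one, add_assoc]

theorem stmt_11_general (a b c : ℕ) (hpar : Odd a ↔ ¬ Odd b) :
    ∀ n, a + b ≤ n →
      ∀ χ : ℕ → Fin 2, (∀ col, ∃ x, 1 ≤ x ∧ x ≤ n ∧ χ x = col) →
        (∃ x, 1 ≤ x ∧ x + 2 ≤ n ∧ χ x ≠ χ (x + 2)) ∨
        (∃ x, 1 ≤ x ∧ x ≤ n ∧ a * x ^ c + b ≤ n ∧ χ x = χ (a * x ^ c + b)) := by
  intro n hn χ _
  rw [or_iff_not_imp_left]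
  intro hrainbow
  push Not at hrainbow
  have hodd : Odd (a + b) := Nat.odd_add.mpr (by simpa only [Nat.not_odd_iff_even] using hpar)
  obtain ⟨k, hk⟩ := hodd
  refine ⟨1, le_rfl, by omega, by simpa using hn, ?_⟩
  have hsame := apply_add_two_mul_eq_of_forall_apply_add_two_eq hrainbow le_rfl k (by omega)
  simpa [hk, add_comm] using hsame

/-- upper bound, `a` and `b` of different parity.
For integers `a ≥ 1`, `b ≥ 0`, `c ≥ 2` with exactly one of `a`, `b` odd, and for every
`n ≥ a + b`, every exact `2`-coloring of `[n]` contains either a rainbow solution of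
`y = x + 2` or a monochromatic solution of `y = a·x^c + b`. -/
theorem stmt_11 (a b c : ℕ) (ha : 1 ≤ a) (hc : 2 ≤ c) (hpar : Odd a ↔ ¬ Odd b) :
    ∀ n, a + b ≤ n →
      ∀ χ : ℕ → Fin 2, (∀ col, ∃ x, 1 ≤ x ∧ x ≤ n ∧ χ x = col) →
        (∃ x, 1 ≤ x ∧ x + 2 ≤ n ∧ χ x ≠ χ (x + 2)) ∨
        (∃ x, 1 ≤ x ∧ x ≤ n ∧ a * x ^ c + b ≤ n ∧ χ x = χ (a * x ^ c + b)) :=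
  stmt_11_general a b c hpar
end

section
/- Let a ≥ 1, b ≥ 0, c ≥ 2 be integers such that a and b have different parity (exactly one of a, b is odd), and assume a + b ≥ 3. Then there exists an exact 2-coloring χ of [a+b−1] (the parity coloring) such that there is no x with x + 2 ≤ a+b−1 and χ(x) ≠ χ(x+2), and no x ∈ [a+b−1] with a·x^c + b ≤ a+b−1 and χ(x) = χ(a·x^c + b). Consequently, GR_2(y = x + 2 : y = a·x^c + b) = a + b. -/
/-! The parity coloring has no rainbow solution of `y = x + 2`, and on `[a+b−1]` the equation
`y = a·x^c + b` has no solution at all, since `a·x^c + b ≥ a + b` for `x ≥ 1`. Conversely, if a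
coloring of `[n]`, `n ≥ a + b`, has no rainbow solution of `y = x + 2`, it is constant on the odd
numbers, so `(1, a·1^c + b) = (1, a + b)` is monochromatic because `a + b` is odd. -/

def parityColoring (x : ℕ) : Fin 2 := ⟨x % 2, x.mod_lt two_pos⟩

lemma parityColoring_add_two (x : ℕ) : parityColoring (x + 2) = parityColoring x :=
  Fin.ext (Nat.add_mod_right x 2)

lemma exists_parityColoring_eq (col : Fin 2) :
    ∃ x, 1 ≤ x ∧ x ≤ 2 ∧ parityColoring x = col := by
  fin_cases col
  · exact ⟨2, by decide, le_rfl, rfl⟩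
  · exact ⟨1, le_rfl, by decide, rfl⟩

lemma apply_add_two_mul_eq {α : Type*} {χ : ℕ → α} {n : ℕ}
    (h : ∀ x, 1 ≤ x → x + 2 ≤ n → χ x = χ (x + 2)) {x : ℕ} (hx : 1 ≤ x) :
    ∀ k, x + 2 * k ≤ n → χ (x + 2 * k) = χ x
  | 0, _ => rfl
  | k + 1, hk => by
    rw [← apply_add_two_mul_eq h hx k (by omega), h (x + 2 * k) (by omega) (by omega)]
    rfl

lemma add_le_mul_pow_add (a b c : ℕ) {x : ℕ} (hx : 1 ≤ x) : a + b ≤ a * x ^ c + b :=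
  Nat.add_le_add_right (Nat.le_mul_of_pos_right a (Nat.pow_pos hx)) b

theorem stmt_12_general (a b c : ℕ) (hpar : Odd a ↔ ¬ Odd b)
    (hab : 3 ≤ a + b) :
    (∃ χ : ℕ → Fin 2, (∀ col, ∃ x, 1 ≤ x ∧ x ≤ a + b - 1 ∧ χ x = col) ∧
      (¬ ∃ x, 1 ≤ x ∧ x + 2 ≤ a + b - 1 ∧ χ x ≠ χ (x + 2)) ∧
      (¬ ∃ x, 1 ≤ x ∧ x ≤ a + b - 1 ∧ a * x ^ c + b ≤ a + b - 1 ∧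
        χ x = χ (a * x ^ c + b))) ∧
    IsLeast {N : ℕ | 1 ≤ N ∧ ∀ n, N ≤ n →
      ∀ χ : ℕ → Fin 2, (∀ col, ∃ x, 1 ≤ x ∧ x ≤ n ∧ χ x = col) →
        (∃ x, 1 ≤ x ∧ x + 2 ≤ n ∧ χ x ≠ χ (x + 2)) ∨
        (∃ x, 1 ≤ x ∧ x ≤ n ∧ a * x ^ c + b ≤ n ∧ χ x = χ (a * x ^ c + b))} (a + b) := by
  obtain ⟨k, hk⟩ : Odd (a + b) := Nat.odd_add.mpr (hpar.trans Nat.not_odd_iff_even)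
  have hsurj (col : Fin 2) : ∃ x, 1 ≤ x ∧ x ≤ a + b - 1 ∧ parityColoring x = col :=
    let ⟨x, hx1, hx2, hx⟩ := exists_parityColoring_eq col
    ⟨x, hx1, by omega, hx⟩
  have hrainbow : ¬ ∃ x, 1 ≤ x ∧ x + 2 ≤ a + b - 1 ∧ parityColoring x ≠ parityColoring (x + 2) :=
    fun ⟨x, _, _, hne⟩ => hne (parityColoring_add_two x).symm
  have hmono : ¬ ∃ x, 1 ≤ x ∧ x ≤ a + b - 1 ∧ a * x ^ c + b ≤ a + b - 1 ∧
      parityColoring x = parityColoring (a * x ^ c + b) :=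
    fun ⟨x, hx, _, hle, _⟩ => by have := add_le_mul_pow_add a b c hx; omega
  refine ⟨⟨parityColoring, hsurj, hrainbow, hmono⟩, ⟨by omega, fun n hn χ _ => ?_⟩,
    fun N ⟨_, hN⟩ => ?_⟩
  · refine or_iff_not_imp_left.mpr fun hr => ⟨1, le_rfl, by omega, by simp; omega, ?_⟩
    push Not at hr
    have h := apply_add_two_mul_eq hr le_rfl k (by omega)
    rw [one_pow, mul_one, hk, add_comm, h]
  · by_contra! hlt
    exact (hN (a + b - 1) (by omega) parityColoring hsurj).elim hrainbow hmono

/-- lower bound and exact value, `a` and `b` of different parity.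
For integers `a ≥ 1`, `b ≥ 0`, `c ≥ 2` with exactly one of `a`, `b` odd and `a + b ≥ 3`,
there is an exact `2`-coloring of `[a+b−1]` (the parity coloring) with no rainbow solution
of `y = x + 2` and no monochromatic solution of `y = a·x^c + b`; consequently
`GR_2(y = x + 2 : y = a·x^c + b) = a + b`. -/
theorem stmt_12 (a b c : ℕ) (ha : 1 ≤ a) (hc : 2 ≤ c) (hpar : Odd a ↔ ¬ Odd b)
    (hab : 3 ≤ a + b) :
    (∃ χ : ℕ → Fin 2, (∀ col, ∃ x, 1 ≤ x ∧ x ≤ a + b - 1 ∧ χ x = col) ∧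
      (¬ ∃ x, 1 ≤ x ∧ x + 2 ≤ a + b - 1 ∧ χ x ≠ χ (x + 2)) ∧
      (¬ ∃ x, 1 ≤ x ∧ x ≤ a + b - 1 ∧ a * x ^ c + b ≤ a + b - 1 ∧
        χ x = χ (a * x ^ c + b))) ∧
    IsLeast {N : ℕ | 1 ≤ N ∧ ∀ n, N ≤ n →
      ∀ χ : ℕ → Fin 2, (∀ col, ∃ x, 1 ≤ x ∧ x ≤ n ∧ χ x = col) →
        (∃ x, 1 ≤ x ∧ x + 2 ≤ n ∧ χ x ≠ χ (x + 2)) ∨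
        (∃ x, 1 ≤ x ∧ x ≤ n ∧ a * x ^ c + b ≤ n ∧ χ x = χ (a * x ^ c + b))} (a + b) :=
  stmt_12_general a b c hpar hab
end

section
/- Let a ≥ 2, b ≥ 0, c ≥ 2 be integers with a and b both even. Then for every integer n ≥ a·2^c + b, every exact 2-coloring χ of [n] contains either a rainbow solution of y = x + 2 (an x with x + 2 ≤ n and χ(x) ≠ χ(x+2)) or a monochromatic solution of y = a·x^c + b (an x ∈ [n] with a·x^c + b ≤ n and χ(x) = χ(a·x^c + b)). -/
/-- upper bound, `a` and `b` both even.
For integers `a ≥ 2`, `b ≥ 0`, `c ≥ 2` with `a` and `b` both even, and for every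
`n ≥ a·2^c + b`, every exact `2`-coloring of `[n]` contains either a rainbow solution of
`y = x + 2` or a monochromatic solution of `y = a·x^c + b`. -/
theorem stmt_13 (a b c : ℕ) (ha : 2 ≤ a) (hc : 2 ≤ c) (hae : Even a) (hbe : Even b) :
    ∀ n, a * 2 ^ c + b ≤ n →
      ∀ χ : ℕ → Fin 2, (∀ col, ∃ x, 1 ≤ x ∧ x ≤ n ∧ χ x = col) →
        (∃ x, 1 ≤ x ∧ x + 2 ≤ n ∧ χ x ≠ χ (x + 2)) ∨
        (∃ x, 1 ≤ x ∧ x ≤ n ∧ a * x ^ c + b ≤ n ∧ χ x = χ (a * x ^ c + b)) := by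
  intro n hn χ hsurj
  by_cases hr : ∃ x, 1 ≤ x ∧ x + 2 ≤ n ∧ χ x ≠ χ (x + 2)
  · exact Or.inl hr
  push_neg at hr
  right
  have key : ∀ k, 2 + 2 * k ≤ n → χ (2 + 2 * k) = χ 2 := by
    intro k
    induction k with
    | zero => intro _; rfl
    | succ k ih =>
      intro h
      have h2 : 2 + 2 * k + 2 ≤ n := by omega
      have hx := hr (2 + 2 * k) (by omega) h2
      have e : 2 + 2 * (k + 1) = 2 + 2 * k + 2 := by ring
      rw [e, ← hx, ih (by omega)]
  obtain ⟨a2, haa⟩ := hae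
  obtain ⟨b2, hbb⟩ := hbe
  have h8 : 8 ≤ a * 2 ^ c := by
    calc 8 = 2 * 2 ^ 2 := by norm_num
    _ ≤ a * 2 ^ c := Nat.mul_le_mul ha (Nat.pow_le_pow_right (by norm_num) hc)
  refine ⟨2, by norm_num, by omega, hn, ?_⟩
  have hm : a * 2 ^ c + b = 2 + 2 * (a2 * 2 ^ c + b2 - 1) := by
    have h2 : a * 2 ^ c + b = 2 * (a2 * 2 ^ c + b2) := by rw [haa, hbb]; ring
    omega
  rw [hm, key _ (by omega)]
end

section
/- Let a ≥ 2, b ≥ 0, c ≥ 2 be integers with a and b both even. Then there exists an exact 2-coloring χ of [a·2^c + b − 1] (the parity coloring) such that there is no x with x + 2 ≤ a·2^c + b − 1 and χ(x) ≠ χ(x+2), and no x with a·x^c + b ≤ a·2^c + b − 1 and χ(x) = χ(a·x^c + b). Consequently, GR_2(y = x + 2 : y = a·x^c + b) = a·2^c + b. -/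
private lemma step_chain (n : ℕ) (χ : ℕ → Fin 2)
    (h : ∀ x, 1 ≤ x → x + 2 ≤ n → χ x = χ (x + 2)) :
    ∀ d x, 1 ≤ x → x + 2 * d ≤ n → χ x = χ (x + 2 * d) := by
  intro d
  induction d with
  | zero => intro x _ _; rfl
  | succ d ih =>
    intro x hx hxd
    have h1 : χ x = χ (x + 2) := h x hx (by omega)
    have h2 : χ (x + 2) = χ (x + 2 + 2 * d) := ih (x + 2) (by omega) (by omega)
    rw [h1, h2]; ring_nf

/-- lower bound and exact value, `a` and `b` both even.
For integers `a ≥ 2`, `b ≥ 0`, `c ≥ 2` with `a` and `b` both even, there is an exact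
`2`-coloring of `[a·2^c + b − 1]` (the parity coloring) with no rainbow solution of
`y = x + 2` and no monochromatic solution of `y = a·x^c + b`; consequently
`GR_2(y = x + 2 : y = a·x^c + b) = a·2^c + b`. -/
theorem stmt_14 (a b c : ℕ) (ha : 2 ≤ a) (hc : 2 ≤ c) (hae : Even a) (hbe : Even b) :
    (∃ χ : ℕ → Fin 2, (∀ col, ∃ x, 1 ≤ x ∧ x ≤ a * 2 ^ c + b - 1 ∧ χ x = col) ∧
      (¬ ∃ x, 1 ≤ x ∧ x + 2 ≤ a * 2 ^ c + b - 1 ∧ χ x ≠ χ (x + 2)) ∧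
      (¬ ∃ x, 1 ≤ x ∧ x ≤ a * 2 ^ c + b - 1 ∧ a * x ^ c + b ≤ a * 2 ^ c + b - 1 ∧
        χ x = χ (a * x ^ c + b))) ∧
    IsLeast {N : ℕ | 1 ≤ N ∧ ∀ n, N ≤ n →
      ∀ χ : ℕ → Fin 2, (∀ col, ∃ x, 1 ≤ x ∧ x ≤ n ∧ χ x = col) →
        (∃ x, 1 ≤ x ∧ x + 2 ≤ n ∧ χ x ≠ χ (x + 2)) ∨
        (∃ x, 1 ≤ x ∧ x ≤ n ∧ a * x ^ c + b ≤ n ∧ χ x = χ (a * x ^ c + b))}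
      (a * 2 ^ c + b) := by
  set N := a * 2 ^ c + b with hN
  have hpow : (4 : ℕ) ≤ 2 ^ c := by
    calc (4:ℕ) = 2 ^ 2 := rfl
    _ ≤ 2 ^ c := Nat.pow_le_pow_right (by norm_num) hc
  have hN8 : 8 ≤ N := by
    have : 2 * 4 ≤ a * 2 ^ c := Nat.mul_le_mul ha hpow
    omega
  -- parity coloring
  set χ0 : ℕ → Fin 2 := fun x => if x % 2 = 0 then 0 else 1 with hχ0
  have part1 : (∀ col, ∃ x, 1 ≤ x ∧ x ≤ N - 1 ∧ χ0 x = col) ∧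
      (¬ ∃ x, 1 ≤ x ∧ x + 2 ≤ N - 1 ∧ χ0 x ≠ χ0 (x + 2)) ∧
      (¬ ∃ x, 1 ≤ x ∧ x ≤ N - 1 ∧ a * x ^ c + b ≤ N - 1 ∧
        χ0 x = χ0 (a * x ^ c + b)) := by
    refine ⟨?_, ?_, ?_⟩
    · intro col
      fin_cases col
      · exact ⟨2, by omega, by omega, by simp [hχ0]⟩
      · exact ⟨1, by omega, by omega, by simp [hχ0]⟩
    · rintro ⟨x, hx1, hx2, hne⟩
      apply hne
      have : (x + 2) % 2 = x % 2 := by omega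
      simp only [hχ0, this]
    · rintro ⟨x, hx1, hx2, hx3, heq⟩
      have hev : (a * x ^ c + b) % 2 = 0 :=
        Nat.even_iff.mp ((hae.mul_right _).add hbe)
      have hxev : x % 2 = 0 := by
        by_contra hodd
        simp only [hχ0, hev, if_pos rfl, hodd, if_neg hodd] at heq
        exact absurd heq (by decide)
      have hx2' : 2 ≤ x := by omega
      have hpow2 : 2 ^ c ≤ x ^ c := Nat.pow_le_pow_left hx2' c
      have : N ≤ a * x ^ c + b := by
        have := Nat.mul_le_mul_left a hpow2
        omega
      omega
  refine ⟨⟨χ0, part1⟩, ⟨by omega, ?_⟩, ?_⟩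
  · -- membership: every coloring of [n], n ≥ N, has rainbow or mono
    intro n hn χ _
    by_cases h : ∃ x, 1 ≤ x ∧ x + 2 ≤ n ∧ χ x ≠ χ (x + 2)
    · exact Or.inl h
    · right
      push_neg at h
      have hchain := step_chain n χ (fun x hx hxn => h x hx hxn)
      have hNev : N % 2 = 0 := Nat.even_iff.mp ((hae.mul_right _).add hbe)
      obtain ⟨d, hd⟩ : ∃ d, N = 2 + 2 * d := ⟨(N - 2) / 2, by omega⟩
      refine ⟨2, by omega, by omega, by omega, ?_⟩
      have : a * 2 ^ c + b = 2 + 2 * d := hd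
      rw [this]
      exact hchain d 2 (by omega) (by omega)
  · -- lower bound
    rintro M ⟨hM1, hM2⟩
    by_contra hlt
    push_neg at hlt
    rcases hM2 (N - 1) (by omega) χ0 part1.1 with h | h
    · exact part1.2.1 h
    · exact part1.2.2 h
end

section
/- Let f : ℕ+ → ℕ+ be a strictly monotonically increasing function and let b ≥ 2 be an integer. Suppose x_min = min{x ∈ ℕ+ : b divides f(x) − x} exists. Then for every integer n ≥ f(x_min), every exact b-coloring χ of [n] contains either a rainbow solution of y = x + b (an x with x + b ≤ n and χ(x) ≠ χ(x+b)) or a monochromatic solution of y = f(x) (an x ∈ [n] with f(x) ≤ n and χ(x) = χ(f(x))). -/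
/-- upper bound for `GR_b(y = x + b : y = f(x))`.
Let `f` be a strictly monotonically increasing function on the positive integers (taking
positive values) and `b ≥ 2`. Suppose `x_min` is the least positive `x` with
`b ∣ f(x) − x` (equivalently `f(x) ≡ x (mod b)`). Then for every `n ≥ f(x_min)`, every
exact `b`-coloring of `[n]` contains either a rainbow solution of `y = x + b` or a
monochromatic solution of `y = f(x)`. -/
theorem stmt_15 (b : ℕ) (hb : 2 ≤ b) (f : ℕ → ℕ)
    (hfpos : ∀ x, 1 ≤ x → 1 ≤ f x)
    (hmono : ∀ x y, 1 ≤ x → x < y → f x < f y)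
    (xmin : ℕ) (hx : IsLeast {x : ℕ | 1 ≤ x ∧ f x ≡ x [MOD b]} xmin) :
    ∀ n, f xmin ≤ n →
      ∀ χ : ℕ → Fin b, (∀ col, ∃ x, 1 ≤ x ∧ x ≤ n ∧ χ x = col) →
        (∃ x, 1 ≤ x ∧ x + b ≤ n ∧ χ x ≠ χ (x + b)) ∨
        (∃ x, 1 ≤ x ∧ x ≤ n ∧ f x ≤ n ∧ χ x = χ (f x)) := by
  intro n hn χ _hsurj
  by_cases hr : ∃ x, 1 ≤ x ∧ x + b ≤ n ∧ χ x ≠ χ (x + b)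
  · exact Or.inl hr
  push_neg at hr
  right
  obtain ⟨⟨hx1, hxm⟩, _⟩ := hx
  -- f x ≥ x for all x ≥ 1
  have hge : ∀ x, 1 ≤ x → x ≤ f x := by
    intro x
    induction x with
    | zero => intro h; omega
    | succ m ih =>
      intro _
      rcases Nat.eq_zero_or_pos m with h0 | h0
      · subst h0; exact hfpos 1 le_rfl
      · have := hmono m (m + 1) h0 (Nat.lt_succ_self m)
        have := ih h0
        omega
  have hle : xmin ≤ f xmin := hge xmin hx1
  obtain ⟨k, hk⟩ : ∃ k, f xmin = xmin + b * k := by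
    have : b ∣ f xmin - xmin := (Nat.modEq_iff_dvd' hle).mp hxm.symm
    obtain ⟨k, hk⟩ := this
    exact ⟨k, by omega⟩
  have key : ∀ j, xmin + b * j ≤ n → χ xmin = χ (xmin + b * j) := by
    intro j
    induction j with
    | zero => intro _; simp
    | succ m ih =>
      intro h
      have h1 : xmin + b * m + b ≤ n := by ring_nf; ring_nf at h; omega
      have := hr (xmin + b * m) (by omega) h1
      have h2 : xmin + b * m ≤ n := by omega
      rw [ih h2, this]
      ring_nf
  have hxn : xmin ≤ n := le_trans hle hn
  refine ⟨xmin, hx1, hxn, hn, ?_⟩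
  rw [hk]
  exact key k (by omega)
end

section
/- Let f : ℕ+ → ℕ+ be a strictly monotonically increasing function with f(x) > x for all x ∈ ℕ+, and let b ≥ 2 be an integer. Suppose x_min = min{x ∈ ℕ+ : b divides f(x) − x} exists. Then f(x_min) ≥ b + 1 and there exists an exact b-coloring χ of [f(x_min) − 1] (coloring each m by its residue class modulo b) such that there is no x with x + b ≤ f(x_min) − 1 and χ(x) ≠ χ(x+b), and no x with f(x) ≤ f(x_min) − 1 and χ(x) = χ(f(x)). Consequently, GR_b(y = x + b : y = f(x)) = f(x_min). -/
/-- lower bound and exact value of `GR_b(y = x + b : y = f(x))`.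
Let `f` be a strictly monotonically increasing function on the positive integers (taking
positive values) with `f(x) > x` for all positive `x`, and let `b ≥ 2`. Suppose `x_min`
is the least positive `x` with `b ∣ f(x) − x` (equivalently `f(x) ≡ x (mod b)`). Then
`f(x_min) ≥ b + 1`, there is an exact `b`-coloring of `[f(x_min) − 1]` (residues mod `b`)
with no rainbow solution of `y = x + b` and no monochromatic solution of `y = f(x)`,
and consequently `GR_b(y = x + b : y = f(x)) = f(x_min)`. -/
theorem stmt_16 (b : ℕ) (hb : 2 ≤ b) (f : ℕ → ℕ)
    (hfpos : ∀ x, 1 ≤ x → 1 ≤ f x)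
    (hmono : ∀ x y, 1 ≤ x → x < y → f x < f y)
    (hgt : ∀ x, 1 ≤ x → x < f x)
    (xmin : ℕ) (hx : IsLeast {x : ℕ | 1 ≤ x ∧ f x ≡ x [MOD b]} xmin) :
    b + 1 ≤ f xmin ∧
    (∃ χ : ℕ → Fin b, (∀ col, ∃ x, 1 ≤ x ∧ x ≤ f xmin - 1 ∧ χ x = col) ∧
      (¬ ∃ x, 1 ≤ x ∧ x + b ≤ f xmin - 1 ∧ χ x ≠ χ (x + b)) ∧
      (¬ ∃ x, 1 ≤ x ∧ x ≤ f xmin - 1 ∧ f x ≤ f xmin - 1 ∧ χ x = χ (f x))) ∧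
    IsLeast {N : ℕ | 1 ≤ N ∧ ∀ n, N ≤ n →
      ∀ χ : ℕ → Fin b, (∀ col, ∃ x, 1 ≤ x ∧ x ≤ n ∧ χ x = col) →
        (∃ x, 1 ≤ x ∧ x + b ≤ n ∧ χ x ≠ χ (x + b)) ∨
        (∃ x, 1 ≤ x ∧ x ≤ n ∧ f x ≤ n ∧ χ x = χ (f x))} (f xmin) := by
  obtain ⟨⟨hx1, hxmod⟩, hleast⟩ := hx
  have hbpos : 0 < b := by omega
  have hfx : xmin < f xmin := hgt xmin hx1
  have hdvd : b ∣ f xmin - xmin := (Nat.modEq_iff_dvd' (le_of_lt hfx)).mp hxmod.symm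
  obtain ⟨k, hk⟩ := hdvd
  have hk1 : 1 ≤ k := by
    rcases Nat.eq_zero_or_pos k with h | h
    · subst h; simp at hk; omega
    · exact h
  have hbk : b ≤ b * k := Nat.le_mul_of_pos_right b hk1
  have hfeq : f xmin = xmin + b * k := by rw [← hk]; omega
  have h1 : b + 1 ≤ f xmin := by omega
  -- the residue coloring
  set χ0 : ℕ → Fin b := fun m => ⟨m % b, Nat.mod_lt m hbpos⟩ with hχ0
  have hval : ∀ m, (χ0 m : ℕ) = m % b := fun m => rfl
  have hsurj0 : ∀ col : Fin b, ∃ x, 1 ≤ x ∧ x ≤ f xmin - 1 ∧ χ0 x = col := by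
    intro col
    refine ⟨if (col : ℕ) = 0 then b else (col : ℕ), ?_, ?_, ?_⟩
    · split <;> omega
    · have := col.isLt; split <;> omega
    · apply Fin.ext
      rw [hval]
      by_cases h : (col : ℕ) = 0
      · rw [if_pos h, Nat.mod_self, h]
      · rw [if_neg h, Nat.mod_eq_of_lt col.isLt]
  have hnorb : ∀ x : ℕ, χ0 x = χ0 (x + b) := by
    intro x
    apply Fin.ext
    rw [hval, hval, Nat.add_mod_right]
  have hnomono : ¬ ∃ x, 1 ≤ x ∧ x ≤ f xmin - 1 ∧ f x ≤ f xmin - 1 ∧ χ0 x = χ0 (f x) := by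
    rintro ⟨x, hx1', hxle, hfle, heq⟩
    have hmod : f x ≡ x [MOD b] := by
      have := congrArg (Fin.val) heq
      rw [hval, hval] at this
      exact this.symm
    have hge : xmin ≤ x := hleast ⟨hx1', hmod⟩
    have : f xmin ≤ f x := by
      rcases eq_or_lt_of_le hge with h | h
      · rw [h]
      · exact le_of_lt (hmono xmin x hx1 h)
    omega
  refine ⟨h1, ⟨χ0, hsurj0, ?_, hnomono⟩, ⟨⟨by omega, ?_⟩, ?_⟩⟩
  · rintro ⟨x, _, _, hne⟩
    exact hne (hnorb x)
  · -- f xmin is in the set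
    intro n hn χ hsurj
    by_cases hr : ∃ x, 1 ≤ x ∧ x + b ≤ n ∧ χ x ≠ χ (x + b)
    · exact Or.inl hr
    · right
      push_neg at hr
      have key : ∀ j x, 1 ≤ x → x + b * j ≤ n → χ x = χ (x + b * j) := by
        intro j
        induction j with
        | zero => intro x _ _; simp
        | succ j ih =>
          intro x hx1' hle
          rw [Nat.mul_succ] at hle ⊢
          have e1 := ih x hx1' (by omega)
          have e2 := hr (x + b * j) (by omega) (by omega)
          rw [← Nat.add_assoc]
          exact e1.trans e2
      refine ⟨xmin, hx1, by omega, by omega, ?_⟩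
      rw [hfeq]
      exact key k xmin hx1 (by omega)
  · -- lower bound
    rintro N ⟨hN1, hNprop⟩
    by_contra h
    push_neg at h
    rcases hNprop (f xmin - 1) (by omega) χ0 hsurj0 with ⟨x, _, _, hne⟩ | hmono'
    · exact hne (hnorb x)
    · exact hnomono hmono'
end

section
/- Let f : ℕ+ → ℕ+ be a strictly monotonically increasing function and let b ≥ 2 be an integer. Suppose that no x ∈ ℕ+ satisfies b divides f(x) − x. Then there exists an exact b-coloring χ of ℕ+ (coloring each m by its residue class modulo b) such that χ(x) = χ(x+b) for all x ∈ ℕ+ (no rainbow solution of y = x + b) and χ(x) ≠ χ(f(x)) for all x ∈ ℕ+ (no monochromatic solution of y = f(x)). Consequently, GR_b(y = x + b : y = f(x)) does not exist. -/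
/-- nonexistence of `GR_b(y = x + b : y = f(x))`.
Let `f` be a strictly monotonically increasing function on the positive integers (taking
positive values) and `b ≥ 2`, and suppose no positive `x` satisfies `b ∣ f(x) − x`
(equivalently `f(x) ≡ x (mod b)`). Then there is an exact `b`-coloring `χ` of `ℕ+`
(residues mod `b`) with `χ x = χ (x + b)` for all positive `x` (no rainbow solution of
`y = x + b`) and `χ x ≠ χ (f x)` for all positive `x` (no monochromatic solution of
`y = f(x)`); consequently `GR_b(y = x + b : y = f(x))` does not exist. -/
theorem stmt_17 (b : ℕ) (hb : 2 ≤ b) (f : ℕ → ℕ)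
    (hfpos : ∀ x, 1 ≤ x → 1 ≤ f x)
    (hmono : ∀ x y, 1 ≤ x → x < y → f x < f y)
    (hno : ∀ x, 1 ≤ x → ¬ (f x ≡ x [MOD b])) :
    (∃ χ : ℕ → Fin b, (∀ col, ∃ x, 1 ≤ x ∧ χ x = col) ∧
      (∀ x, 1 ≤ x → χ x = χ (x + b)) ∧
      (∀ x, 1 ≤ x → χ x ≠ χ (f x))) ∧
    ¬ ∃ N : ℕ, 1 ≤ N ∧ ∀ n, N ≤ n →
      ∀ χ : ℕ → Fin b, (∀ col, ∃ x, 1 ≤ x ∧ x ≤ n ∧ χ x = col) →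
        (∃ x, 1 ≤ x ∧ x + b ≤ n ∧ χ x ≠ χ (x + b)) ∨
        (∃ x, 1 ≤ x ∧ x ≤ n ∧ f x ≤ n ∧ χ x = χ (f x)) := by
  have hbpos : 0 < b := by omega
  set χ : ℕ → Fin b := fun m => ⟨m % b, Nat.mod_lt _ hbpos⟩ with hχ
  have hsame : ∀ x, χ x = χ (x + b) := by
    intro x
    apply Fin.ext
    simp [hχ, Nat.add_mod_right]
  have hdiff : ∀ x, 1 ≤ x → χ x ≠ χ (f x) := by
    intro x hx h
    apply hno x hx
    have : x % b = f x % b := congrArg Fin.val h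
    exact (Nat.ModEq.symm this)
  have hsurj : ∀ col : Fin b, χ (col.val + b) = col := by
    intro col
    apply Fin.ext
    simp [hχ, Nat.mod_eq_of_lt col.isLt]
  constructor
  · refine ⟨χ, ?_, fun x _ => hsame x, hdiff⟩
    intro col
    exact ⟨col.val + b, by omega, hsurj col⟩
  · rintro ⟨N, hN, h⟩
    have hn : N ≤ N + 2 * b := by omega
    rcases h (N + 2 * b) hn χ (by
      intro col
      exact ⟨col.val + b, by omega, by have := col.isLt; omega, hsurj col⟩) with
      ⟨x, _, _, hx⟩ | ⟨x, hx1, _, _, hx⟩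
    · exact hx (hsame x)
    · exact hdiff x hx1 hx
end
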